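/- arXiv:1111.4451 — 4 statements merged into one kernel-verified Lean document; each statement's English description precedes it below -/
import Mathlib

section
/- Let G be a group with a normal subgroup N isomorphic to the cyclic group ℤ/4 such that the quotient G/N is isomorphic to ℤ/2. Then G is isomorphic to one of: the cyclic group ℤ/8, the direct product ℤ/4 × ℤ/2, the dihedral group of order 8, or the quaternion group Q₈. -/
set_option linter.unusedSectionVars false

section helpers

variable {G : Type*} [Group G]

lemma pvadd {x : G} {n : ℕ} [NeZero n] (h : orderOf x = n) (i j : ZMod n) :
    x ^ (i + j).val = x ^ i.val * x ^ j.val := by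
  rw [← pow_add, ZMod.val_add]
  subst h
  exact pow_mod_orderOf x _

lemma pvneg {x : G} {n : ℕ} [NeZero n] (h : orderOf x = n) (i : ZMod n) :
    x ^ (-i).val = (x ^ i.val)⁻¹ := by
  refine eq_inv_of_mul_eq_one_left ?_
  rw [← pvadd h, neg_add_cancel, ZMod.val_zero, pow_zero]

lemma pvcast {x : G} {n : ℕ} [NeZero n] (h : orderOf x = n) (k : ℕ) :
    x ^ ((k : ZMod n)).val = x ^ k := by
  rw [ZMod.val_natCast]
  subst h
  exact pow_mod_orderOf x _

end helpers

section aux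

variable {G : Type*} [Group G] [Finite G]

lemma conj_pow_aux {x t : G} (hrel : t * x = x⁻¹ * t) (k : ℕ) :
    t * x ^ k = (x ^ k)⁻¹ * t := by
  induction k with
  | zero => simp
  | succ k ih =>
    rw [pow_succ, ← mul_assoc, ih, mul_assoc, hrel]
    group

lemma aux_dihedral (hG : Nat.card G = 8) {x t : G} (hx : orderOf x = 4)
    (ht2 : t ^ 2 = 1) (hrel : t * x = x⁻¹ * t)
    (hgen : ∀ g : G, (∃ k : ℕ, g = x ^ k) ∨ (∃ k : ℕ, g = x ^ k * t)) :
    Nonempty (G ≃* DihedralGroup 4) := by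
  have hconj : ∀ i : ZMod 4, t * x ^ i.val = x ^ (-i).val * t := by
    intro i
    rw [conj_pow_aux hrel, pvneg hx]
  let φ : DihedralGroup 4 →* G :=
    { toFun := fun g => match g with
        | DihedralGroup.r i => x ^ (-i).val
        | DihedralGroup.sr i => x ^ i.val * t
      map_one' := by
        show x ^ (-(0 : ZMod 4)).val = 1
        simp
      map_mul' := by
        rintro (i | i) (j | j)
        · show x ^ (-(i+j)).val = x ^ (-i).val * x ^ (-j).val
          rw [neg_add, pvadd hx]
        · show x ^ (j - i).val * t = x ^ (-i).val * (x ^ j.val * t)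
          rw [← mul_assoc, ← pvadd hx]
          ring_nf
        · show x ^ (i + j).val * t = (x ^ i.val * t) * x ^ (-j).val
          rw [mul_assoc, hconj, neg_neg, ← mul_assoc, ← pvadd hx]
        · show x ^ (-(j - i)).val = (x ^ i.val * t) * (x ^ j.val * t)
          rw [mul_assoc, ← mul_assoc t, hconj, mul_assoc, ← sq, ht2, mul_one,
            ← pvadd hx]
          ring_nf }
  have hsurj : Function.Surjective φ := by
    intro g
    rcases hgen g with ⟨k, rfl⟩ | ⟨k, rfl⟩
    · refine ⟨DihedralGroup.r (-(k : ZMod 4)), ?_⟩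
      show x ^ (-(-(k : ZMod 4))).val = x ^ k
      rw [neg_neg, pvcast hx]
    · refine ⟨DihedralGroup.sr (k : ZMod 4), ?_⟩
      show x ^ ((k : ZMod 4)).val * t = x ^ k * t
      rw [pvcast hx]
  have : Fintype G := Fintype.ofFinite G
  have hbij : Function.Bijective φ := by
    rw [Fintype.bijective_iff_surjective_and_card]
    refine ⟨hsurj, ?_⟩
    rw [DihedralGroup.card, ← Nat.card_eq_fintype_card, hG]
  exact ⟨(MulEquiv.ofBijective φ hbij).symm⟩


lemma aux_quat (hG : Nat.card G = 8) {x t : G} (hx : orderOf x = 4)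
    (ht2 : t ^ 2 = x ^ 2) (hrel : t * x = x⁻¹ * t)
    (hgen : ∀ g : G, (∃ k : ℕ, g = x ^ k) ∨ (∃ k : ℕ, g = x ^ k * t)) :
    Nonempty (G ≃* QuaternionGroup 2) := by
  haveI : NeZero (2 * 2) := ⟨by norm_num⟩
  have hx' : orderOf x = 2 * 2 := hx
  have hconj : ∀ i : ZMod (2 * 2), t * x ^ i.val = x ^ (-i).val * t := by
    intro i
    rw [conj_pow_aux hrel, pvneg hx']
  have h4 : (((2 : ℕ) : ZMod (2 * 2))) + ((2 : ℕ) : ZMod (2 * 2)) = 0 := by decide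
  let φ : QuaternionGroup 2 →* G :=
    { toFun := fun g => match g with
        | QuaternionGroup.a i => x ^ (-i).val
        | QuaternionGroup.xa i => x ^ i.val * t
      map_one' := by
        show x ^ (-(0 : ZMod (2 * 2))).val = 1
        simp
      map_mul' := by
        rintro (i | i) (j | j)
        · show x ^ (-(i+j)).val = x ^ (-i).val * x ^ (-j).val
          rw [neg_add, pvadd hx']
        · show x ^ (j - i).val * t = x ^ (-i).val * (x ^ j.val * t)
          rw [← mul_assoc, ← pvadd hx']
          ring_nf
        · show x ^ (i + j).val * t = (x ^ i.val * t) * x ^ (-j).val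
          rw [mul_assoc, hconj, neg_neg, ← mul_assoc, ← pvadd hx']
        · show x ^ (-(((2 : ℕ) : ZMod (2 * 2)) + j - i)).val = (x ^ i.val * t) * (x ^ j.val * t)
          have htt : t * t = x ^ 2 := by rw [← pow_two]; exact ht2
          have e1 : -(((2 : ℕ) : ZMod (2 * 2)) + j - i) = i + (-j + ((2 : ℕ) : ZMod (2 * 2))) := by
            linear_combination (-1 : ZMod (2 * 2)) * h4
          rw [e1, mul_assoc, ← mul_assoc t, hconj, mul_assoc, htt,
            ← pvcast hx' 2, ← pvadd hx', ← pvadd hx'] }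
  have hsurj : Function.Surjective φ := by
    intro g
    rcases hgen g with ⟨k, rfl⟩ | ⟨k, rfl⟩
    · refine ⟨QuaternionGroup.a (-(k : ZMod (2 * 2))), ?_⟩
      show x ^ (-(-(k : ZMod (2 * 2)))).val = x ^ k
      rw [neg_neg, pvcast hx']
    · refine ⟨QuaternionGroup.xa (k : ZMod (2 * 2)), ?_⟩
      show x ^ ((k : ZMod (2 * 2))).val * t = x ^ k * t
      rw [pvcast hx']
  have : Fintype G := Fintype.ofFinite G
  have hbij : Function.Bijective φ := by
    rw [Fintype.bijective_iff_surjective_and_card]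
    refine ⟨hsurj, ?_⟩
    rw [QuaternionGroup.card, ← Nat.card_eq_fintype_card, hG]
  exact ⟨(MulEquiv.ofBijective φ hbij).symm⟩


lemma aux_prod (hG : Nat.card G = 8) {x t : G} (hx : orderOf x = 4)
    (ht : orderOf t = 2) (hc : Commute x t)
    (hgen : ∀ g : G, (∃ k : ℕ, g = x ^ k) ∨ (∃ k : ℕ, g = x ^ k * t)) :
    Nonempty (G ≃* Multiplicative (ZMod 4 × ZMod 2)) := by
  let φ : Multiplicative (ZMod 4 × ZMod 2) →* G :=
    { toFun := fun p => x ^ (Multiplicative.toAdd p).1.val * t ^ (Multiplicative.toAdd p).2.val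
      map_one' := by
        show x ^ ((0 : ZMod 4)).val * t ^ ((0 : ZMod 2)).val = 1
        simp
      map_mul' := by
        intro p q
        show x ^ ((Multiplicative.toAdd p).1 + (Multiplicative.toAdd q).1).val *
            t ^ ((Multiplicative.toAdd p).2 + (Multiplicative.toAdd q).2).val = _
        rw [pvadd hx, pvadd ht]
        rw [mul_assoc (x ^ (Multiplicative.toAdd p).1.val),
          ← mul_assoc (x ^ (Multiplicative.toAdd q).1.val),
          (hc.pow_pow (Multiplicative.toAdd q).1.val (Multiplicative.toAdd p).2.val).eq,
          mul_assoc (t ^ (Multiplicative.toAdd p).2.val), ← mul_assoc] }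
  have hsurj : Function.Surjective φ := by
    intro g
    rcases hgen g with ⟨k, rfl⟩ | ⟨k, rfl⟩
    · refine ⟨Multiplicative.ofAdd ((k : ZMod 4), (0 : ZMod 2)), ?_⟩
      show x ^ ((k : ZMod 4)).val * t ^ ((0 : ZMod 2)).val = x ^ k
      rw [pvcast hx]
      simp
    · refine ⟨Multiplicative.ofAdd ((k : ZMod 4), (1 : ZMod 2)), ?_⟩
      show x ^ ((k : ZMod 4)).val * t ^ ((1 : ZMod 2)).val = x ^ k * t
      rw [pvcast hx]
      norm_num [ZMod.val_one]
  have : Fintype G := Fintype.ofFinite G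
  have hbij : Function.Bijective φ := by
    rw [Fintype.bijective_iff_surjective_and_card]
    refine ⟨hsurj, ?_⟩
    rw [← Nat.card_eq_fintype_card, ← Nat.card_eq_fintype_card, hG]
    simp [Nat.card_eq_fintype_card]
  exact ⟨(MulEquiv.ofBijective φ hbij).symm⟩

end aux

/-- Any extension of `ℤ/4` by `ℤ/2` is isomorphic to `ℤ/8`, `ℤ/4 × ℤ/2`,
the dihedral group of order 8, or the quaternion group `Q₈`. -/
theorem stmt3 {G : Type*} [Group G]
    (N : Subgroup G) [N.Normal]
    (hN : Nonempty (N ≃* Multiplicative (ZMod 4)))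
    (hQ : Nonempty ((G ⧸ N) ≃* Multiplicative (ZMod 2))) :
    Nonempty (G ≃* Multiplicative (ZMod 8)) ∨
    Nonempty (G ≃* Multiplicative (ZMod 4 × ZMod 2)) ∨
    Nonempty (G ≃* DihedralGroup 4) ∨
    Nonempty (G ≃* QuaternionGroup 2) := by
  obtain ⟨e⟩ := hN
  obtain ⟨f⟩ := hQ
  haveI : Finite N := Finite.of_equiv _ e.symm.toEquiv
  haveI : Finite (G ⧸ N) := Finite.of_equiv _ f.symm.toEquiv
  haveI : Finite G := Finite.of_equiv _ (Subgroup.groupEquivQuotientProdSubgroup (s := N)).symm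
  have hcard : Nat.card G = 8 := by
    rw [Subgroup.card_eq_card_quotient_mul_card_subgroup N,
      Nat.card_congr f.toEquiv, Nat.card_congr e.toEquiv]
    simp [Nat.card_eq_fintype_card]
  set x : G := ((e.symm (Multiplicative.ofAdd (1 : ZMod 4))) : G) with hxdef
  have hxN : x ∈ N := (e.symm (Multiplicative.ofAdd (1 : ZMod 4))).2
  have hx : orderOf x = 4 := by
    rw [hxdef, Subgroup.orderOf_coe, MulEquiv.orderOf_eq, orderOf_ofAdd_eq_addOrderOf,
      ZMod.addOrderOf_one]
  have hx4 : x ^ 4 = 1 := by rw [← hx]; exact pow_orderOf_eq_one x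
  have hx2 : x ^ 2 ≠ 1 := by
    intro h
    have := orderOf_dvd_of_pow_eq_one h
    rw [hx] at this
    omega
  have hmem : ∀ g : G, g ∈ N → ∃ k : ℕ, g = x ^ k := by
    intro g hg
    obtain ⟨v, hv⟩ : ∃ v : ℕ, e ⟨g, hg⟩ = (Multiplicative.ofAdd (1 : ZMod 4)) ^ v := by
      refine ⟨(Multiplicative.toAdd (e ⟨g, hg⟩)).val, ?_⟩
      rw [← ofAdd_nsmul]
      simp [nsmul_eq_mul, ZMod.natCast_val, ZMod.cast_id]
    refine ⟨v, ?_⟩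
    have h2 : (⟨g, hg⟩ : N) = (e.symm (Multiplicative.ofAdd (1 : ZMod 4))) ^ v := by
      rw [← map_pow, ← hv, MulEquiv.symm_apply_apply]
    have h3 := congrArg (fun z : N => (z : G)) h2
    simpa using h3
  set q : G ⧸ N := f.symm (Multiplicative.ofAdd (1 : ZMod 2)) with hqdef
  set t : G := q.out with htdef
  have hqt : (t : G ⧸ N) = q := QuotientGroup.out_eq' q
  have htN : t ∉ N := by
    intro ht
    have h1 : (t : G ⧸ N) = 1 := (QuotientGroup.eq_one_iff t).2 ht
    rw [hqt, hqdef] at h1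
    have := f.symm.injective (h1.trans (map_one f.symm).symm)
    exact absurd this (by decide)
  have h2N : t ^ 2 ∈ N := by
    have h1 : ((t ^ 2 : G) : G ⧸ N) = 1 := by
      have : ((t ^ 2 : G) : G ⧸ N) = ((t : G ⧸ N)) ^ 2 := rfl
      rw [this, hqt, hqdef, ← map_pow]
      have : (Multiplicative.ofAdd (1 : ZMod 2)) ^ 2 = 1 := by decide
      rw [this, map_one]
    exact (QuotientGroup.eq_one_iff _).1 h1
  have hgen : ∀ g : G, (∃ k : ℕ, g = x ^ k) ∨ (∃ k : ℕ, g = x ^ k * t) := by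
    intro g
    by_cases hg : g ∈ N
    · exact Or.inl (hmem g hg)
    · refine Or.inr ?_
      have hz : ∀ z : Multiplicative (ZMod 2), z = 1 ∨ z = Multiplicative.ofAdd 1 := by decide
      rcases hz (f (g : G ⧸ N)) with h | h
      · exact absurd ((QuotientGroup.eq_one_iff g).1
          (f.injective (by rw [h, map_one]))) hg
      · have hgq : (g : G ⧸ N) = q := by
          rw [hqdef]
          exact f.injective (by rw [h]; simp)
        have h1 : ((g * t⁻¹ : G) : G ⧸ N) = 1 := by
          have : ((g * t⁻¹ : G) : G ⧸ N) = (g : G ⧸ N) * ((t : G ⧸ N))⁻¹ := rfl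
          rw [this, hgq, hqt, mul_inv_cancel]
        obtain ⟨k, hk⟩ := hmem _ ((QuotientGroup.eq_one_iff _).1 h1)
        exact ⟨k, by rw [← hk]; group⟩
  -- conjugation analysis
  have hyN : t * x * t⁻¹ ∈ N := ‹N.Normal›.conj_mem x hxN t
  have hordy : orderOf (t * x * t⁻¹) = 4 := by
    have : t * x * t⁻¹ = (MulAut.conj t) x := by rw [MulAut.conj_apply]
    rw [this, MulEquiv.orderOf_eq, hx]
  obtain ⟨k, hk⟩ := hmem _ hyN
  have hk' : t * x * t⁻¹ = x ^ (k % 4) := by rw [← hx, pow_mod_orderOf, ← hk]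
  have hklt : k % 4 < 4 := by omega
  interval_cases h : k % 4
  · rw [pow_zero] at hk'
    rw [hk', orderOf_one] at hordy
    omega
  · -- abelian case
    rw [pow_one] at hk'
    have hcomm : Commute x t := by
      have h1 : t * x = x * t := by
        have := hk'
        rw [mul_inv_eq_iff_eq_mul] at this
        exact this
      exact h1.symm
    obtain ⟨m, hm⟩ := hmem _ h2N
    have hm' : t ^ 2 = x ^ (m % 4) := by rw [← hx, pow_mod_orderOf, ← hm]
    have hmlt : m % 4 < 4 := by omega
    have cyclic_case : ∀ m' : ℕ, m' % 2 = 1 → m' < 4 → t ^ 2 = x ^ m' →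
        Nonempty (G ≃* Multiplicative (ZMod 8)) := by
      intro m' hodd hlt hts
      have ht8 : t ^ 8 = 1 := by
        have : t ^ 8 = (t ^ 2) ^ 4 := by rw [← pow_mul]
        rw [this, hts, ← pow_mul, mul_comm, pow_mul, hx4, one_pow]
      have ht4 : t ^ 4 ≠ 1 := by
        have h4 : t ^ 4 = x ^ (2 * m') := by
          have : t ^ 4 = (t ^ 2) ^ 2 := by rw [← pow_mul]
          rw [this, hts, ← pow_mul, mul_comm]
        have h5 : x ^ (2 * m') = x ^ 2 := by
          rw [← pow_mod_orderOf, hx]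
          congr 1
          omega
        rw [h4, h5]
        exact hx2
      have h8 : orderOf t ∣ 8 := orderOf_dvd_of_pow_eq_one ht8
      have hnot4 : ¬ orderOf t ∣ 4 := fun h => ht4 (orderOf_dvd_iff_pow_eq_one.1 h)
      have hord8 : orderOf t = 8 := by
        have h8' : orderOf t ∣ 2 ^ 3 := by rw [show (2:ℕ) ^ 3 = 8 by norm_num]; exact h8
        obtain ⟨i, hi, hival⟩ := (Nat.dvd_prime_pow Nat.prime_two).1 h8'
        interval_cases i
        · exact absurd (hival ▸ (by norm_num : (2:ℕ) ^ 0 ∣ 4)) hnot4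
        · exact absurd (hival ▸ (by norm_num : (2:ℕ) ^ 1 ∣ 4)) hnot4
        · exact absurd (hival ▸ (by norm_num : (2:ℕ) ^ 2 ∣ 4)) hnot4
        · rw [hival]; norm_num
      have hcyc : IsCyclic G := isCyclic_of_orderOf_eq_card t (by rw [hcard]; exact hord8)
      exact ⟨hcard ▸ (zmodCyclicMulEquiv hcyc).symm⟩
    interval_cases h2 : m % 4
    · -- t^2 = 1
      rw [pow_zero] at hm'
      have htne : t ≠ 1 := fun h => htN (h ▸ N.one_mem)
      have hordt : orderOf t = 2 := orderOf_eq_prime hm' htne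
      exact Or.inr (Or.inl (aux_prod hcard hx hordt hcomm hgen))
    · exact Or.inl (cyclic_case 1 (by norm_num) (by norm_num) (by rw [hm', pow_one]))
    · -- t^2 = x^2 : replace t by x * t
      have ht'N : x * t ∉ N := fun h => htN (by
        have := N.mul_mem (N.inv_mem hxN) h
        rwa [inv_mul_cancel_left] at this)
      have hc' : Commute x (x * t) := (Commute.refl x).mul_right hcomm
      have ht'2 : (x * t) ^ 2 = 1 := by
        rw [hcomm.mul_pow, hm', ← pow_add]
        exact hx4
      have hordt' : orderOf (x * t) = 2 := orderOf_eq_prime ht'2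
        (fun h => ht'N (h ▸ N.one_mem))
      have hgen' : ∀ g : G, (∃ j : ℕ, g = x ^ j) ∨ (∃ j : ℕ, g = x ^ j * (x * t)) := by
        intro g
        rcases hgen g with ⟨j, rfl⟩ | ⟨j, rfl⟩
        · exact Or.inl ⟨j, rfl⟩
        · refine Or.inr ⟨j + 3, ?_⟩
          rw [← mul_assoc, ← pow_succ]
          have : x ^ (j + 3 + 1) = x ^ j := by
            rw [show j + 3 + 1 = j + 4 from rfl, pow_add, hx4, mul_one]
          rw [this]
      exact Or.inr (Or.inl (aux_prod hcard hx hordt' hc' hgen'))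
    · exact Or.inl (cyclic_case 3 (by norm_num) (by norm_num) (by rw [hm']))
  · -- t x t⁻¹ = x^2 : impossible
    have : (t * x * t⁻¹) ^ 2 = 1 := by
      rw [hk', ← pow_mul]
      exact hx4
    have := orderOf_dvd_of_pow_eq_one this
    rw [hordy] at this
    omega
  · -- dihedral / quaternion case
    have hrel : t * x = x⁻¹ * t := by
      have h3 : x ^ 3 = x⁻¹ := by
        refine eq_inv_of_mul_eq_one_right ?_
        rw [← pow_succ']
        exact hx4
      rw [← h3, ← hk']
      group
    obtain ⟨m, hm⟩ := hmem _ h2N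
    have hm' : t ^ 2 = x ^ (m % 4) := by rw [← hx, pow_mod_orderOf, ← hm]
    have hmlt : m % 4 < 4 := by omega
    -- t^2 is fixed by conjugation by t, but conj by t inverts x^j
    have hfix : x ^ (2 * (m % 4)) = 1 := by
      have h2 : t * x ^ (m % 4) * t⁻¹ = (x ^ (m % 4))⁻¹ := by
        rw [conj_pow_aux hrel]
        group
      have h1 : t * x ^ (m % 4) * t⁻¹ = x ^ (m % 4) := by
        rw [← hm']
        group
      have hinv : x ^ (m % 4) = (x ^ (m % 4))⁻¹ := h1.symm.trans h2
      rw [two_mul, pow_add]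
      nth_rewrite 2 [hinv]
      simp
    have hdvd := orderOf_dvd_of_pow_eq_one hfix
    rw [hx] at hdvd
    have hm02 : m % 4 = 0 ∨ m % 4 = 2 := by omega
    rcases hm02 with h2 | h2
    · rw [h2, pow_zero] at hm'
      exact Or.inr (Or.inr (Or.inl (aux_dihedral hcard hx hm' hrel hgen)))
    · rw [h2] at hm'
      exact Or.inr (Or.inr (Or.inr (aux_quat hcard hx hm' hrel hgen)))
end

section
/- Let G be a group with a normal subgroup N isomorphic to the cyclic group ℤ/6 such that the quotient G/N is isomorphic to ℤ/2. Then G is isomorphic to one of: the cyclic group ℤ/12, the direct product ℤ/6 × ℤ/2, the dihedral group of order 12, or the dicyclic group of order 12 (the semidirect product ℤ/3 ⋊ ℤ/4). -/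
private lemma pow_mod_of_pow_eq_one {G : Type*} [Group G] {a : G} {n : ℕ} (h : a ^ n = 1)
    (x : ℕ) : a ^ (x % n) = a ^ x := by
  conv_rhs => rw [← Nat.div_add_mod x n]
  rw [pow_add, pow_mul, h, one_pow, one_mul]

private lemma pow_val_add {G : Type*} [Group G] {a : G} {n : ℕ} [NeZero n] (h : a ^ n = 1)
    (i j : ZMod n) : a ^ (i + j).val = a ^ i.val * a ^ j.val := by
  rw [ZMod.val_add, pow_mod_of_pow_eq_one h, pow_add]

private lemma pow_val_natCast {G : Type*} [Group G] {a : G} {n : ℕ} [NeZero n] (h : a ^ n = 1)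
    (m : ℕ) : a ^ ((m : ZMod n)).val = a ^ m := by
  rw [ZMod.val_natCast, pow_mod_of_pow_eq_one h]

/-- Any extension of `ℤ/6` by `ℤ/2` is isomorphic to `ℤ/12`, `ℤ/6 × ℤ/2`,
the dihedral group of order 12, or the dicyclic group of order 12. -/
theorem stmt4 {G : Type*} [Group G]
    (N : Subgroup G) [N.Normal]
    (hN : Nonempty (N ≃* Multiplicative (ZMod 6)))
    (hQ : Nonempty ((G ⧸ N) ≃* Multiplicative (ZMod 2))) :
    Nonempty (G ≃* Multiplicative (ZMod 12)) ∨
    Nonempty (G ≃* Multiplicative (ZMod 6 × ZMod 2)) ∨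
    Nonempty (G ≃* DihedralGroup 6) ∨
    Nonempty (G ≃* QuaternionGroup 3) := by
  obtain ⟨eN⟩ := hN
  obtain ⟨eQ⟩ := hQ
  have hcardN : Nat.card N = 6 := by
    rw [Nat.card_congr eN.toEquiv]
    simp [Nat.card_eq_fintype_card]
  have hcardQ : Nat.card (G ⧸ N) = 2 := by
    rw [Nat.card_congr eQ.toEquiv]
    simp [Nat.card_eq_fintype_card]
  have hcardG : Nat.card G = 12 := by
    rw [Subgroup.card_eq_card_quotient_mul_card_subgroup N, hcardN, hcardQ]
  have hfinG : Finite G := Nat.finite_of_card_ne_zero (by rw [hcardG]; norm_num)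
  -- the generator of N
  set a' : N := eN.symm (Multiplicative.ofAdd 1) with ha'def
  set a : G := (a' : G) with hadef
  have ha'6 : orderOf a' = 6 := by
    have h1 := orderOf_injective eN.toMonoidHom eN.injective a'
    have h2 : eN a' = Multiplicative.ofAdd 1 := by rw [ha'def]; exact eN.apply_symm_apply _
    rw [← h1]
    show orderOf (eN a') = 6
    rw [h2, orderOf_ofAdd_eq_addOrderOf, ZMod.addOrderOf_one]
  have ha6ord : orderOf a = 6 := by
    have := orderOf_injective N.subtype N.subtype_injective a'
    rw [hadef, ← ha'6]
    exact this
  have ha6 : a ^ 6 = 1 := by rw [← ha6ord]; exact pow_orderOf_eq_one a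
  have ha3 : a ^ 3 ≠ 1 := by
    intro h
    have := orderOf_dvd_of_pow_eq_one h
    rw [ha6ord] at this
    omega
  have hzp : Subgroup.zpowers a' = ⊤ := by
    apply Subgroup.eq_top_of_card_eq
    rw [Nat.card_zpowers, ha'6, hcardN]
  have hmemN : ∀ g ∈ N, ∃ i : ℕ, g = a ^ i := by
    intro g hg
    have h1 : (⟨g, hg⟩ : N) ∈ Submonoid.powers a' :=
      mem_powers_iff_mem_zpowers.2 (hzp ▸ Subgroup.mem_top _)
    obtain ⟨i, hi⟩ := h1
    refine ⟨i, ?_⟩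
    have h2 : a' ^ i = (⟨g, hg⟩ : N) := hi
    have h3 := congrArg Subtype.val h2
    rw [hadef]
    simpa using h3.symm
  -- choose b outside N
  obtain ⟨b, hb⟩ : ∃ b : G, (b : G ⧸ N) = eQ.symm (Multiplicative.ofAdd 1) :=
    Quotient.exists_rep _
  have hbN : b ∉ N := by
    intro h
    have h1 : (b : G ⧸ N) = 1 := (QuotientGroup.eq_one_iff b).2 h
    rw [hb] at h1
    have : (Multiplicative.ofAdd (1 : ZMod 2)) = 1 := by
      have := eQ.symm.injective (h1.trans (map_one eQ.symm).symm)
      exact this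
    exact absurd this (by decide)
  have hb2N : b ^ 2 ∈ N := by
    rw [← QuotientGroup.eq_one_iff]
    have : ((b ^ 2 : G) : G ⧸ N) = ((b : G ⧸ N)) ^ 2 := rfl
    rw [this, hb, ← map_pow]
    have : (Multiplicative.ofAdd (1 : ZMod 2)) ^ 2 = 1 := by decide
    rw [this, map_one]
  have hcoset : ∀ g : G, (∃ i : ℕ, g = a ^ i) ∨ (∃ i : ℕ, g = a ^ i * b) := by
    intro g
    by_cases hg : g ∈ N
    · exact Or.inl (hmemN g hg)
    · right
      have h2 : ∀ z : Multiplicative (ZMod 2), z = 1 ∨ z = Multiplicative.ofAdd 1 := by decide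
      rcases h2 (eQ ((g : G ⧸ N))) with h | h
      · exfalso
        apply hg
        rw [← QuotientGroup.eq_one_iff]
        have := eQ.injective (h.trans (map_one eQ).symm)
        exact this
      · have hgb : ((g * b⁻¹ : G) : G ⧸ N) = 1 := by
          have h3 : ((g : G) : G ⧸ N) = eQ.symm (Multiplicative.ofAdd 1) := by
            rw [← h]; exact (eQ.symm_apply_apply _).symm
          have : ((g * b⁻¹ : G) : G ⧸ N) = ((g : G) : G ⧸ N) * ((b : G ⧸ N))⁻¹ := rfl
          rw [this, h3, hb, mul_inv_cancel]
        obtain ⟨i, hi⟩ := hmemN _ ((QuotientGroup.eq_one_iff _).1 hgb)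
        exact ⟨i, by rw [← hi]; group⟩
  -- conjugation exponent
  obtain ⟨k0, hk0⟩ := hmemN _ (Subgroup.Normal.conj_mem ‹N.Normal› a
    (by rw [hadef]; exact a'.2) b)
  obtain ⟨m0, hm0⟩ := hmemN _ hb2N
  have hconjpow : ∀ x : ℕ, b * a ^ x * b⁻¹ = a ^ (k0 * x) := by
    intro x
    rw [← conj_pow, hk0, ← pow_mul]
  have hkk : a ^ (k0 * k0) = a ^ 1 := by
    have h1 : b * (b * a * b⁻¹) * b⁻¹ = a ^ (k0 * k0) := by
      rw [hk0]; exact hconjpow k0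
    have h2 : b * (b * a * b⁻¹) * b⁻¹ = b ^ 2 * a * (b ^ 2)⁻¹ := by rw [pow_two]; group
    rw [h2, hm0] at h1
    rw [← h1, pow_one]
    have : a ^ m0 * a = a * a ^ m0 := (Commute.self_pow a m0).symm.eq
    rw [this, mul_assoc]
    simp
  -- reduce exponents mod 6
  have hmodkk : (k0 * k0) % 6 = 1 % 6 := by
    have h := pow_eq_pow_iff_modEq.1 hkk
    rwa [ha6ord] at h
  set k := k0 % 6 with hkdef
  have hklt : k < 6 := Nat.mod_lt _ (by norm_num)
  have hk : b * a * b⁻¹ = a ^ k := by rw [hk0, ← pow_mod_of_pow_eq_one ha6]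
  have hk2 : (k * k) % 6 = 1 % 6 := by rw [hkdef, ← Nat.mul_mod]; exact hmodkk
  have hk15 : k = 1 ∨ k = 5 := by interval_cases k <;> omega
  set m := m0 % 6 with hmdef
  have hmlt : m < 6 := Nat.mod_lt _ (by norm_num)
  have hm : b ^ 2 = a ^ m := by rw [hm0, ← pow_mod_of_pow_eq_one ha6]
  rcases hk15 with hk1 | hk5
  · -- abelian case
    rw [hk1, pow_one] at hk
    have hab : Commute a b := (mul_inv_eq_iff_eq_mul.1 hk).symm
    have hcomm : ∀ x y : G, x * y = y * x := by
      intro x y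
      rcases hcoset x with ⟨i, rfl⟩ | ⟨i, rfl⟩ <;> rcases hcoset y with ⟨j, rfl⟩ | ⟨j, rfl⟩
      · exact ((Commute.refl a).pow_pow i j).eq
      · exact (((Commute.refl a).pow_pow i j).mul_right (hab.pow_left i)).eq
      · exact (((Commute.refl a).pow_pow j i).mul_right (hab.pow_left j)).symm.eq
      · exact ((((Commute.refl a).pow_pow i j).mul_right (hab.pow_left i)).mul_left
          ((hab.symm.pow_right j).mul_right (Commute.refl b))).eq
    -- helper : element squaring to a gives cyclic of order 12
    have cyc12 : ∀ c : G, c ^ 2 = a → Nonempty (G ≃* Multiplicative (ZMod 12)) := by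
      intro c hc
      have hc12 : c ^ 12 = 1 := by
        rw [show (12 : ℕ) = 2 * 6 from rfl, pow_mul, hc, ha6]
      have hc6 : c ^ 6 ≠ 1 := by
        rw [show (6 : ℕ) = 2 * 3 from rfl, pow_mul, hc]; exact ha3
      have hdvd : orderOf c ∣ 12 := orderOf_dvd_of_pow_eq_one hc12
      have h6dvd : 6 ∣ orderOf c := by
        have h := orderOf_pow_dvd (x := c) 2
        rwa [hc, ha6ord] at h
      have ho : orderOf c = 12 := by
        obtain ⟨e, he⟩ := h6dvd
        have he2 : e ∣ 2 := by
          have h12 : 6 * e ∣ 6 * 2 := by rw [← he]; exact hdvd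
          exact (mul_dvd_mul_iff_left (by norm_num : (6 : ℕ) ≠ 0)).1 h12
        have hele : e ≤ 2 := Nat.le_of_dvd (by norm_num) he2
        have hene : e ≠ 0 := by
          rintro rfl
          rw [Nat.mul_zero] at he
          rw [he] at hdvd
          exact absurd (Nat.eq_zero_of_zero_dvd hdvd) (by norm_num)
        have : e = 1 ∨ e = 2 := by omega
        rcases this with rfl | rfl
        · exfalso
          apply hc6
          rw [Nat.mul_one] at he
          exact he ▸ pow_orderOf_eq_one c
        · rw [he]
      have hcy : IsCyclic G := ⟨⟨c, fun x => by
        have htop : Subgroup.zpowers c = ⊤ :=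
          Subgroup.eq_top_of_card_eq _ (by rw [Nat.card_zpowers, ho, hcardG])
        show x ∈ Subgroup.zpowers c
        rw [htop]; trivial⟩⟩
      letI := hcy
      refine ⟨mulEquivOfCyclicCardEq ?_⟩
      rw [hcardG, Nat.card_eq_fintype_card]
      rfl
    letI : CommGroup G := { (inferInstance : Group G) with mul_comm := hcomm }
    have hsq : ∀ t : ℕ, (a ^ t * b) ^ 2 = a ^ (t * 2 + m) := by
      intro t
      rw [mul_pow, ← pow_mul, hm, ← pow_add]
    have habel12 : ∀ t : ℕ, (t * 2 + m) % 6 = 1 → Nonempty (G ≃* Multiplicative (ZMod 12)) := by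
      intro t ht
      apply cyc12 (a ^ t * b)
      rw [hsq t, ← pow_mod_of_pow_eq_one ha6, ht, pow_one]
    have habel62 : ∀ t : ℕ, (t * 2 + m) % 6 = 0 →
        Nonempty (G ≃* Multiplicative (ZMod 6 × ZMod 2)) := by
      intro t ht
      set b' : G := a ^ t * b with hb'
      have hb'2 : b' ^ 2 = 1 := by
        rw [hb', hsq t, ← pow_mod_of_pow_eq_one ha6, ht, pow_zero]
      have hbexp : ∀ i : ℕ, a ^ i * b = a ^ (i + 5 * t) * b' ^ 1 := by
        intro i
        have h4 : a ^ (i + 5 * t) * a ^ t = a ^ i := by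
          rw [← pow_add, show i + 5 * t + t = i + 6 * t by ring, pow_add, pow_mul, ha6,
            one_pow, mul_one]
        rw [hb', pow_one, ← mul_assoc, h4]
      have hcoset' : ∀ g : G, ∃ (i : ℕ) (j : ℕ), g = a ^ i * b' ^ j := by
        intro g
        rcases hcoset g with ⟨i, rfl⟩ | ⟨i, rfl⟩
        · exact ⟨i, 0, by rw [pow_zero, mul_one]⟩
        · exact ⟨i + 5 * t, 1, hbexp i⟩
      let F : Multiplicative (ZMod 6 × ZMod 2) → G := fun x =>
        a ^ (Multiplicative.toAdd x).1.val * b' ^ (Multiplicative.toAdd x).2.val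
      have hmul : ∀ x y, F (x * y) = F x * F y := by
        intro x y
        show a ^ ((Multiplicative.toAdd x).1 + (Multiplicative.toAdd y).1).val *
            b' ^ ((Multiplicative.toAdd x).2 + (Multiplicative.toAdd y).2).val = _
        rw [pow_val_add ha6, pow_val_add hb'2, mul_mul_mul_comm]
      have hsurj : Function.Surjective F := by
        intro g
        obtain ⟨i, j, rfl⟩ := hcoset' g
        refine ⟨Multiplicative.ofAdd ((i : ZMod 6), (j : ZMod 2)), ?_⟩
        show a ^ ((i : ZMod 6)).val * b' ^ ((j : ZMod 2)).val = _
        rw [pow_val_natCast ha6, pow_val_natCast hb'2]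
      have hbij : Function.Bijective F := (Nat.bijective_iff_surjective_and_card F).2
        ⟨hsurj, by rw [hcardG, Nat.card_eq_fintype_card]; rfl⟩
      exact ⟨(MulEquiv.ofBijective (MonoidHom.mk' F hmul) hbij).symm⟩
    clear_value m
    have hm6 : m = 0 ∨ m = 1 ∨ m = 2 ∨ m = 3 ∨ m = 4 ∨ m = 5 := by omega
    rcases hm6 with rfl | rfl | rfl | rfl | rfl | rfl
    · exact Or.inr (Or.inl (habel62 0 (by norm_num)))
    · exact Or.inl (habel12 0 (by norm_num))
    · exact Or.inr (Or.inl (habel62 2 (by norm_num)))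
    · exact Or.inl (habel12 5 (by norm_num))
    · exact Or.inr (Or.inl (habel62 1 (by norm_num)))
    · exact Or.inl (habel12 1 (by norm_num))
  · -- nonabelian case : conjugation inverts
    rw [hk5] at hk
    have hconj5 : ∀ x : ℕ, b * a ^ x * b⁻¹ = a ^ (5 * x) := by
      intro x; rw [← conj_pow, hk, ← pow_mul]
    have hm03 : m = 0 ∨ m = 3 := by
      have h1 : b * a ^ m * b⁻¹ = a ^ m := by rw [← hm]; group
      rw [hconj5 m] at h1
      have h2 := pow_eq_pow_iff_modEq.1 h1
      rw [ha6ord] at h2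
      have h3 : (5 * m) % 6 = m % 6 := h2
      omega
    have h5i : ∀ j : ZMod 6, 5 * j = -j := by decide
    have hswap : ∀ i : ZMod 6, b * a ^ i.val = a ^ (-i).val * b := by
      intro i
      have h1 : b * a ^ i.val * b⁻¹ = a ^ (5 * i.val) := hconj5 _
      have h2 : ((5 * i.val : ℕ) : ZMod 6) = -i := by
        rw [Nat.cast_mul, ZMod.natCast_rightInverse i]
        rw [show ((5 : ℕ) : ZMod 6) = 5 by norm_num]
        exact h5i i
      have h3 : a ^ (5 * i.val) = a ^ ((-i)).val := by
        rw [← pow_val_natCast ha6 (5 * i.val), h2]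
      rw [h3] at h1
      exact mul_inv_eq_iff_eq_mul.1 h1
    rcases hm03 with hm0' | hm3'
    · -- dihedral
      have hbb : b * b = 1 := by rw [← pow_two, hm, hm0', pow_zero]
      let F : DihedralGroup 6 → G := fun x =>
        match x with
        | DihedralGroup.r i => a ^ (-i).val
        | DihedralGroup.sr i => a ^ i.val * b
      have hmul : ∀ x y, F (x * y) = F x * F y := by
        rintro (i | i) (j | j)
        · show a ^ (-(i + j)).val = a ^ (-i).val * a ^ (-j).val
          rw [neg_add, pow_val_add ha6]
        · show a ^ (j - i).val * b = a ^ (-i).val * (a ^ j.val * b)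
          rw [← mul_assoc, ← pow_val_add ha6, show j - i = -i + j by ring]
        · show a ^ (i + j).val * b = a ^ i.val * b * a ^ (-j).val
          rw [mul_assoc, hswap (-j), neg_neg, ← mul_assoc, ← pow_val_add ha6]
        · show a ^ (-(j - i)).val = a ^ i.val * b * (a ^ j.val * b)
          rw [show a ^ i.val * b * (a ^ j.val * b) = a ^ i.val * (b * a ^ j.val) * b from by group,
            hswap j,
            show a ^ i.val * (a ^ (-j).val * b) * b = a ^ i.val * a ^ (-j).val * (b * b) from by
              group,
            hbb, mul_one, ← pow_val_add ha6, show -(j - i) = i + -j by ring]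
      have hsurj : Function.Surjective F := by
        intro g
        rcases hcoset g with ⟨i, rfl⟩ | ⟨i, rfl⟩
        · refine ⟨DihedralGroup.r (-(i : ZMod 6)), ?_⟩
          show a ^ (-(-(i : ZMod 6))).val = a ^ i
          rw [neg_neg, pow_val_natCast ha6]
        · refine ⟨DihedralGroup.sr (i : ZMod 6), ?_⟩
          show a ^ ((i : ZMod 6)).val * b = a ^ i * b
          rw [pow_val_natCast ha6]
      have hbij : Function.Bijective F := (Nat.bijective_iff_surjective_and_card F).2
        ⟨hsurj, by rw [DihedralGroup.nat_card, hcardG]⟩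
      exact Or.inr (Or.inr (Or.inl ⟨(MulEquiv.ofBijective (MonoidHom.mk' F hmul) hbij).symm⟩))
    · -- quaternion
      have hbb : b * b = a ^ ((3 : ZMod 6)).val := by
        rw [← pow_two, hm, hm3', show ((3 : ZMod 6)).val = 3 from rfl]
      have h33 : ∀ z : ZMod 6, z - 3 = z + 3 := by decide
      let F : QuaternionGroup 3 → G := fun x =>
        match x with
        | QuaternionGroup.a i => a ^ (-i).val
        | QuaternionGroup.xa i => a ^ i.val * b
      have hmul : ∀ x y, F (x * y) = F x * F y := by
        rintro (i | i) (j | j)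
        · show a ^ (-(i + j)).val = a ^ (-i).val * a ^ (-j).val
          rw [neg_add, pow_val_add ha6]
        · show a ^ (j - i).val * b = a ^ (-i).val * (a ^ j.val * b)
          rw [← mul_assoc, ← pow_val_add ha6, show j - i = -i + j by ring]
        · show a ^ (i + j).val * b = a ^ i.val * b * a ^ (-j).val
          rw [mul_assoc, hswap (-j), neg_neg, ← mul_assoc, ← pow_val_add ha6]
        · show a ^ (-(((3 : ℕ) : ZMod (2 * 3)) + j - i)).val = a ^ i.val * b * (a ^ j.val * b)
          rw [show a ^ i.val * b * (a ^ j.val * b) = a ^ i.val * (b * a ^ j.val) * b from by group,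
            hswap j,
            show a ^ i.val * (a ^ (-j).val * b) * b = a ^ i.val * a ^ (-j).val * (b * b) from by
              group,
            hbb, ← pow_val_add ha6, ← pow_val_add ha6,
            show -(((3 : ℕ) : ZMod (2 * 3)) + j - i) = (i + -j) - 3 by push_cast; ring,
            h33 (i + -j)]
      have hsurj : Function.Surjective F := by
        intro g
        rcases hcoset g with ⟨i, rfl⟩ | ⟨i, rfl⟩
        · refine ⟨QuaternionGroup.a (-(i : ZMod (2 * 3))), ?_⟩
          show a ^ (-(-(i : ZMod 6))).val = a ^ i
          rw [neg_neg, pow_val_natCast ha6]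
        · refine ⟨QuaternionGroup.xa (i : ZMod (2 * 3)), ?_⟩
          show a ^ ((i : ZMod 6)).val * b = a ^ i * b
          rw [pow_val_natCast ha6]
      have hbij : Function.Bijective F := (Nat.bijective_iff_surjective_and_card F).2
        ⟨hsurj, by rw [Nat.card_eq_fintype_card, QuaternionGroup.card, hcardG]⟩
      exact Or.inr (Or.inr (Or.inr ⟨(MulEquiv.ofBijective (MonoidHom.mk' F hmul) hbij).symm⟩))
end

section
/- Let G be a group with a normal subgroup N isomorphic to the cyclic group ℤ/10 such that the quotient G/N is isomorphic to ℤ/2. Then G is isomorphic to one of: the cyclic group ℤ/20, the direct product ℤ/10 × ℤ/2, the dihedral group of order 20, or the dicyclic group of order 20 (the semidirect product ℤ/5 ⋊ ℤ/4). -/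
/-!
Write `N = ⟨x⟩` and pick `t ∉ N`. Conjugation by `t` acts on `N` as `x ↦ x ^ k`, and its square
is conjugation by `t² ∈ N`, which is trivial; as `±1` are the only square roots of `1` in
`(ℤ/10)ˣ`, `t` either centralises or inverts `x`. Write `t² = x ^ m`.

If `t` centralises `x`, then `u = t x ^ (-⌊m/2⌋)` satisfies `u² = x ^ (m mod 2)`: either `u² = 1`
and `G = ⟨x⟩ × ⟨u⟩`, or `u² = x` and `u` has order 20. If `t` inverts `x`, then `t` commutes with
`t² = x ^ m` only if `x ^ (2m) = 1`, so `t² = 1` or `t² = x⁵`: these are the defining relations of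
the dihedral and the dicyclic group, and the induced map from the model group is injective, hence
bijective by counting.
-/

open Subgroup Multiplicative

section ZModPowersHom

variable {G : Type*} [Group G] {n : ℕ} {x : G}

noncomputable def zmodPowersHom (x : G) (hx : x ^ n = 1) : Multiplicative (ZMod n) →* G :=
  AddMonoidHom.toMultiplicativeLeft
    (ZMod.lift n ⟨zmultiplesHom (Additive G) (Additive.ofMul x), by simp [← ofMul_pow, hx]⟩)

@[simp]
theorem zmodPowersHom_ofAdd_intCast (hx : x ^ n = 1) (k : ℤ) :
    zmodPowersHom x hx (ofAdd (k : ZMod n)) = x ^ k := by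
  simp [zmodPowersHom]

theorem range_zmodPowersHom (hx : x ^ n = 1) : (zmodPowersHom x hx).range = zpowers x := by
  ext g
  simp [MonoidHom.mem_range, mem_zpowers_iff, ofAdd.surjective.exists,
    ZMod.intCast_surjective.exists]

theorem zmodPowersHom_injective (hx : x ^ n = 1) (hn : orderOf x = n) :
    Function.Injective (zmodPowersHom x hx) := by
  rw [injective_iff_map_eq_one]
  simp only [ofAdd.surjective.forall, ZMod.intCast_surjective.forall, zmodPowersHom_ofAdd_intCast]
  intro k hk
  rw [← orderOf_dvd_iff_zpow_eq_one, hn, ← ZMod.intCast_zmod_eq_zero_iff_dvd] at hk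
  rw [hk, ofAdd_zero]

end ZModPowersHom

namespace DihedralGroup

variable {G : Type*} [Group G] {n : ℕ} (f : Multiplicative (ZMod n) →* G) {t : G}
  (ht : t * t = 1) (hconj : ∀ a, f a * t = t * (f a)⁻¹)

def lift : DihedralGroup n →* G where
  toFun
    | r i => f (ofAdd i)
    | sr i => t * f (ofAdd i)
  map_one' := f.map_one
  map_mul' := by
    rintro (i | i) (j | j) <;>
      simp only [r_mul_r, r_mul_sr, sr_mul_r, sr_mul_sr, sub_eq_neg_add, ofAdd_add, ofAdd_neg,
        map_mul, map_inv]
    · rw [← mul_assoc, ← hconj, mul_assoc]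
    · rw [mul_assoc]
    · rw [mul_assoc, ← mul_assoc (f _), hconj, ← mul_assoc, ← mul_assoc, ht, one_mul]

theorem lift_injective (hf : Function.Injective f) (ht' : t ∉ f.range) :
    Function.Injective (lift f ht hconj) := by
  rw [injective_iff_map_eq_one]
  rintro (i | i) h
  · exact congrArg r (ofAdd.injective (hf (h.trans f.map_one.symm)))
  · exact absurd ⟨(ofAdd i)⁻¹, by rw [map_inv, eq_inv_of_mul_eq_one_left h]⟩ ht'

end DihedralGroup

namespace QuaternionGroup

variable {G : Type*} [Group G] {n : ℕ} (f : Multiplicative (ZMod (2 * n)) →* G) {t : G}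
  (ht : t * t = f (ofAdd n)) (hconj : ∀ a, f a * t = t * (f a)⁻¹)

def lift : QuaternionGroup n →* G where
  toFun
    | a i => f (ofAdd i)
    | xa i => t * f (ofAdd i)
  map_one' := f.map_one
  map_mul' := by
    rintro (i | i) (j | j) <;>
      simp only [a_mul_a, a_mul_xa, xa_mul_a, xa_mul_xa, sub_eq_neg_add, ofAdd_add, ofAdd_neg,
        map_mul, map_inv]
    · rw [← mul_assoc, ← hconj, mul_assoc]
    · rw [mul_assoc]
    · rw [mul_assoc, ← mul_assoc (f _), hconj, mul_assoc t, ← mul_assoc t t, ht]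
      simp only [← mul_assoc, ← map_inv, ← map_mul, mul_comm (ofAdd i)⁻¹]

theorem lift_injective (hf : Function.Injective f) (ht' : t ∉ f.range) :
    Function.Injective (lift f ht hconj) := by
  rw [injective_iff_map_eq_one]
  rintro (i | i) h
  · exact congrArg a (ofAdd.injective (hf (h.trans f.map_one.symm)))
  · exact absurd ⟨(ofAdd i)⁻¹, by rw [map_inv, eq_inv_of_mul_eq_one_left h]⟩ ht'

end QuaternionGroup

section Presentations

variable {G : Type*} [Group G] {n : ℕ} {x t : G}

theorem zpow_mul_eq_mul_inv_of_conj_eq_inv (h : t * x * t⁻¹ = x⁻¹) (k : ℤ) :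
    x ^ k * t = t * (x ^ k)⁻¹ := by
  have : t * x ^ (-k) * t⁻¹ = x ^ k := by rw [← conj_zpow, h, inv_zpow, zpow_neg, inv_inv]
  conv_lhs => rw [← this]
  rw [inv_mul_cancel_right, zpow_neg]

theorem zmodPowersHom_mul_eq_mul_inv (hx : x ^ n = 1) (h : t * x * t⁻¹ = x⁻¹)
    (a : Multiplicative (ZMod n)) : zmodPowersHom x hx a * t = t * (zmodPowersHom x hx a)⁻¹ := by
  obtain ⟨k, rfl⟩ := (ofAdd.surjective.comp ZMod.intCast_surjective) a
  simpa using zpow_mul_eq_mul_inv_of_conj_eq_inv h k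

variable [Finite G]

theorem nonempty_mulEquiv_of_injective_of_card_eq {H : Type*} [Group H] (φ : H →* G)
    (hφ : Function.Injective φ) (hcard : Nat.card H = Nat.card G) : Nonempty (G ≃* H) :=
  ⟨(MulEquiv.ofBijective φ ((Nat.bijective_iff_injective_and_card φ).mpr ⟨hφ, hcard⟩)).symm⟩

theorem nonempty_mulEquiv_dihedralGroup (hx : orderOf x = n) (hG : Nat.card G = 2 * n)
    (ht : t ∉ zpowers x) (hconj : t * x * t⁻¹ = x⁻¹) (ht2 : t ^ 2 = 1) :
    Nonempty (G ≃* DihedralGroup n) := by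
  have hxn : x ^ n = 1 := hx ▸ pow_orderOf_eq_one x
  let φ := DihedralGroup.lift (zmodPowersHom x hxn) ((sq t).symm.trans ht2)
    (zmodPowersHom_mul_eq_mul_inv hxn hconj)
  have hφ : Function.Injective φ := DihedralGroup.lift_injective _ _ _
    (zmodPowersHom_injective hxn hx) (by rwa [range_zmodPowersHom])
  exact nonempty_mulEquiv_of_injective_of_card_eq φ hφ (by rw [DihedralGroup.nat_card, hG])

theorem nonempty_mulEquiv_quaternionGroup [NeZero n] (hx : orderOf x = 2 * n)
    (hG : Nat.card G = 4 * n) (ht : t ∉ zpowers x) (hconj : t * x * t⁻¹ = x⁻¹)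
    (ht2 : t ^ 2 = x ^ n) : Nonempty (G ≃* QuaternionGroup n) := by
  have hxn : x ^ (2 * n) = 1 := hx ▸ pow_orderOf_eq_one x
  have ht2' : t * t = zmodPowersHom x hxn (ofAdd n) := by
    rw [← sq, ← Int.cast_natCast, zmodPowersHom_ofAdd_intCast, zpow_natCast, ht2]
  let φ := QuaternionGroup.lift (zmodPowersHom x hxn) ht2' (zmodPowersHom_mul_eq_mul_inv hxn hconj)
  have hφ : Function.Injective φ := QuaternionGroup.lift_injective _ _ _
    (zmodPowersHom_injective hxn hx) (by rwa [range_zmodPowersHom])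
  exact nonempty_mulEquiv_of_injective_of_card_eq φ hφ
    (by rw [Nat.card_eq_fintype_card, QuaternionGroup.card, hG])

theorem nonempty_mulEquiv_zmod_prod_zmod_two {u : G} (hx : orderOf x = n)
    (hG : Nat.card G = 2 * n) (hu : u ∉ zpowers x) (hu2 : u ^ 2 = 1) (hxu : Commute x u) :
    Nonempty (G ≃* Multiplicative (ZMod n × ZMod 2)) := by
  have hxn : x ^ n = 1 := hx ▸ pow_orderOf_eq_one x
  set f := zmodPowersHom x hxn
  set g := zmodPowersHom u hu2
  have hcomm : ∀ a b, Commute (f a) (g b) := by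
    simp only [(ofAdd.surjective.comp ZMod.intCast_surjective).forall, Function.comp_apply, f, g,
      zmodPowersHom_ofAdd_intCast]
    exact hxu.zpow_zpow
  let φ := (f.noncommCoprod g hcomm).comp (MulEquiv.prodMultiplicative _ _).toMonoidHom
  have hφ : Function.Injective φ := by
    rw [injective_iff_map_eq_one]
    rintro ⟨i, j⟩ h
    obtain ⟨k, rfl⟩ := ZMod.intCast_surjective i
    change f (ofAdd (k : ZMod n)) * g (ofAdd j) = 1 at h
    obtain rfl | rfl := (by decide : ∀ j : ZMod 2, j = 0 ∨ j = 1) j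
    · rw [ofAdd_zero, map_one, mul_one] at h
      exact Prod.ext (zmodPowersHom_injective hxn hx (h.trans f.map_one.symm)) rfl
    · rw [← Int.cast_one, zmodPowersHom_ofAdd_intCast, zmodPowersHom_ofAdd_intCast, zpow_one] at h
      exact absurd (mem_zpowers_iff.mpr ⟨-k, by rw [zpow_neg, eq_inv_of_mul_eq_one_right h]⟩) hu
  exact nonempty_mulEquiv_of_injective_of_card_eq φ hφ
    (by rw [Nat.card_congr toAdd, Nat.card_prod, Nat.card_zmod, Nat.card_zmod, hG, mul_comm])

end Presentations

section Extensions

variable {G : Type*} [Group G] {n : ℕ} {x t : G}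

theorem zpow_mul_self_eq_of_conj_eq_zpow {k : ℤ} (hk : t * x * t⁻¹ = x ^ k)
    (ht : Commute (t ^ 2) x) : x ^ (k * k) = x :=
  calc x ^ (k * k) = t * (t * x * t⁻¹) * t⁻¹ := by rw [hk, ← conj_zpow, hk, ← zpow_mul]
    _ = t ^ 2 * x * (t ^ 2)⁻¹ := by rw [sq]; group
    _ = x := by rw [ht.eq, mul_inv_cancel_right]

theorem zpow_eq_self_or_inv_of_orderOf_eq_ten (hx : orderOf x = 10) {k : ℤ}
    (h : x ^ (k * k) = x) : x ^ k = x ∨ x ^ k = x⁻¹ := by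
  have hcast : ∀ a b : ℤ, x ^ a = x ^ b ↔ (a : ZMod 10) = b := fun a b => by
    rw [zpow_eq_zpow_iff_modEq, hx, ← ZMod.intCast_eq_intCast_iff]
  have hkk : (k : ZMod 10) * k = 1 := by
    simpa using (hcast (k * k) 1).mp (h.trans (zpow_one x).symm)
  have hk : (k : ZMod 10) = 1 ∨ (k : ZMod 10) = -1 := by
    generalize (k : ZMod 10) = a at hkk
    revert a
    decide
  rcases hk with hk | hk
  · left
    simpa using (hcast k 1).mpr (by simpa using hk)
  · right
    simpa using (hcast k (-1)).mpr (by simpa using hk)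

theorem orderOf_eq_two_mul_of_sq_eq {u : G} (h : u ^ 2 = x) (hx : Even (orderOf x)) :
    orderOf u = 2 * orderOf x := by
  rw [← h, orderOf_pow' u two_ne_zero] at hx ⊢
  rcases Nat.even_or_odd (orderOf u) with ho | ho
  · rw [Nat.gcd_eq_right (even_iff_two_dvd.mp ho), Nat.mul_div_cancel' (even_iff_two_dvd.mp ho)]
  · rw [Nat.Coprime.gcd_eq_one (Nat.coprime_two_right.mpr ho), Nat.div_one] at hx
    exact absurd hx (Nat.not_even_iff_odd.mpr ho)

theorem nonempty_mulEquiv_zmod_or_zmod_prod_of_commute [Finite G] (hx : orderOf x = n)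
    (hn : Even n) (hG : Nat.card G = 2 * n) (ht : t ∉ zpowers x) (hxt : Commute x t) {m : ℤ}
    (ht2 : t ^ 2 = x ^ m) :
    Nonempty (G ≃* Multiplicative (ZMod (2 * n))) ∨
      Nonempty (G ≃* Multiplicative (ZMod n × ZMod 2)) := by
  set u := t * x ^ (-(m / 2))
  have hu : u ∉ zpowers x := fun h =>
    ht (by simpa [u] using mul_mem h (zpow_mem (mem_zpowers x) (m / 2)))
  have hxu : Commute x u := hxt.mul_right ((Commute.refl x).zpow_right _)
  have hu2 : u ^ 2 = x ^ (m % 2) := by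
    rw [(hxt.symm.zpow_right _).mul_pow, ht2, ← zpow_natCast (x ^ _), ← zpow_mul, ← zpow_add,
      Int.emod_def]
    ring_nf
  rcases Int.emod_two_eq_zero_or_one m with h | h
  · right
    exact nonempty_mulEquiv_zmod_prod_zmod_two hx hG hu (by rw [hu2, h, zpow_zero]) hxu
  · left
    have : IsCyclic G := isCyclic_of_orderOf_eq_card u
      (by rw [orderOf_eq_two_mul_of_sq_eq (by rw [hu2, h, zpow_one]) (hx ▸ hn), hx, hG])
    exact ⟨mulEquivOfCyclicCardEq (by rw [Nat.card_congr toAdd, Nat.card_zmod, hG])⟩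

theorem sq_eq_one_or_sq_eq_pow_of_conj_eq_inv {l : ℕ} (hx : orderOf x = 2 * l)
    (hconj : t * x * t⁻¹ = x⁻¹) {m : ℤ} (ht2 : t ^ 2 = x ^ m) : t ^ 2 = 1 ∨ t ^ 2 = x ^ l := by
  have hm : (x ^ m)⁻¹ = x ^ m :=
    calc (x ^ m)⁻¹ = (t * x * t⁻¹) ^ m := by rw [hconj, inv_zpow]
      _ = t * t ^ 2 * t⁻¹ := by rw [conj_zpow, ht2]
      _ = x ^ m := by rw [← ht2]; group
  have hdvd : (l : ℤ) ∣ m := by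
    have : ((2 * l : ℕ) : ℤ) ∣ 2 * m := by
      rw [← hx, orderOf_dvd_iff_zpow_eq_one, two_mul, zpow_add]
      nth_rw 1 [← hm]
      exact inv_mul_cancel _
    push_cast at this
    exact (mul_dvd_mul_iff_left two_ne_zero).mp this
  have hx2l : x ^ (2 * (l : ℤ)) = 1 := by exact_mod_cast hx ▸ pow_orderOf_eq_one x
  obtain ⟨j, rfl⟩ := hdvd
  obtain ⟨c, rfl | rfl⟩ := Int.even_or_odd' j
  · left
    rw [ht2, show (l : ℤ) * (2 * c) = 2 * l * c by ring, zpow_mul, hx2l, one_zpow]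
  · right
    rw [ht2, show (l : ℤ) * (2 * c + 1) = 2 * l * c + l by ring, zpow_add, zpow_mul, hx2l,
      one_zpow, one_mul, zpow_natCast]

end Extensions

/-- Any extension of `ℤ/10` by `ℤ/2` is isomorphic to `ℤ/20`, `ℤ/10 × ℤ/2`,
the dihedral group of order 20, or the dicyclic group of order 20. -/
theorem stmt5 {G : Type*} [Group G]
    (N : Subgroup G) [N.Normal]
    (hN : Nonempty (N ≃* Multiplicative (ZMod 10)))
    (hQ : Nonempty ((G ⧸ N) ≃* Multiplicative (ZMod 2))) :
    Nonempty (G ≃* Multiplicative (ZMod 20)) ∨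
    Nonempty (G ≃* Multiplicative (ZMod 10 × ZMod 2)) ∨
    Nonempty (G ≃* DihedralGroup 10) ∨
    Nonempty (G ≃* QuaternionGroup 5) := by
  obtain ⟨e⟩ := hN
  obtain ⟨q⟩ := hQ
  obtain ⟨x, rfl⟩ := N.isCyclic_iff_exists_zpowers_eq_top.mp (e.symm.isCyclic.mp inferInstance)
  have hx : orderOf x = 10 := by
    rw [← Nat.card_zpowers, Nat.card_congr e.toEquiv, Nat.card_congr toAdd, Nat.card_zmod]
  have hindex : (zpowers x).index = 2 := by
    rw [index, Nat.card_congr q.toEquiv, Nat.card_congr toAdd, Nat.card_zmod]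
  have hG : Nat.card G = 20 := by rw [← card_mul_index, hindex, Nat.card_zpowers, hx]
  have : Finite G := Nat.finite_of_card_ne_zero (by rw [hG]; norm_num)
  obtain ⟨t, ht, -⟩ := index_eq_two_iff_exists_notMem_and.mp hindex
  obtain ⟨m, hm⟩ := mem_zpowers_iff.mp (sq_mem_of_index_two hindex t)
  obtain ⟨k, hk⟩ := mem_zpowers_iff.mp (Normal.conj_mem inferInstance x (mem_zpowers x) t)
  have hkk := zpow_mul_self_eq_of_conj_eq_zpow hk.symm (hm ▸ (Commute.refl x).zpow_left m)
  rcases zpow_eq_self_or_inv_of_orderOf_eq_ten hx hkk with h | h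
  · have hxt : Commute x t := (mul_inv_eq_iff_eq_mul.mp (hk.symm.trans h)).symm
    rcases nonempty_mulEquiv_zmod_or_zmod_prod_of_commute hx (by decide) hG ht hxt hm.symm
      with h | h
    exacts [Or.inl h, Or.inr (Or.inl h)]
  · rw [hk] at h
    rcases sq_eq_one_or_sq_eq_pow_of_conj_eq_inv (l := 5) hx h hm.symm with h2 | h2
    · exact Or.inr (Or.inr (Or.inl (nonempty_mulEquiv_dihedralGroup hx hG ht h h2)))
    · exact Or.inr (Or.inr (Or.inr (nonempty_mulEquiv_quaternionGroup hx hG ht h h2)))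
end

section
/- Right multiplication in the time-span group does not in general send rhythms to rhythms: there exist time-spans (t₁, Δ₁) and (t₂, Δ₂) with Δ₁, Δ₂ > 0 and [t₁, t₁ + Δ₁) disjoint from [t₂, t₂ + Δ₂), and a group element (u, δ) with δ > 0, such that the intervals [t₁ + Δ₁u, t₁ + Δ₁u + δΔ₁) and [t₂ + Δ₂u, t₂ + Δ₂u + δΔ₂) are not disjoint. -/
/-- Right multiplication in the time-span group does not in general send
rhythms to rhythms: there are disjoint time-spans `(t₁, Δ₁)`, `(t₂, Δ₂)` and a group
element `(u, δ)` whose right action makes the images overlap. -/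
theorem stmt17 :
    ∃ t₁ Δ₁ t₂ Δ₂ u δ : ℝ, 0 < Δ₁ ∧ 0 < Δ₂ ∧ 0 < δ ∧
      Disjoint (Set.Ico t₁ (t₁ + Δ₁)) (Set.Ico t₂ (t₂ + Δ₂)) ∧
      ¬ Disjoint (Set.Ico (t₁ + Δ₁ * u) (t₁ + Δ₁ * u + δ * Δ₁))
          (Set.Ico (t₂ + Δ₂ * u) (t₂ + Δ₂ * u + δ * Δ₂)) := by
  refine ⟨0, 1, 1, 1, 0, 2, one_pos, one_pos, two_pos, ?_, ?_⟩
  · simp only [zero_add]; exact Set.Ico_disjoint_Ico_same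
  · rw [Set.not_disjoint_iff]
    exact ⟨1, by norm_num, by norm_num⟩
end
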